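/- arXiv:2411.05763 — 4 statements merged into one kernel-verified Lean document; each statement's English description precedes it below -/
import Mathlib

section
/- (Mutually exclusive active sets) Suppose P_{ℓ,i} < P*_i < P_{u,i} for all i and (θ*, λ*) is a KKT point of the constrained flow problem. Let P = Lθ* + P_L, I_ℓ = {i : P_i = P_{ℓ,i}}, I_u = {i : P_i = P_{u,i}}. Then I_ℓ = ∅ or I_u = ∅, i.e., no KKT point has one node at its upper limit and another node at its lower limit simultaneously. -/
/-! At a node on its lower limit the upper multiplier vanishes by complementary slackness and
`P i = Pl i < P⋆ i`, so the common value `c` of the stationarity residual is negative; at a node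
on its upper limit it is positive by the symmetric argument. -/

section ScalarKKT

variable {m s pl pu pstar p μl μu : ℝ}

theorem stationarity_residual_neg_of_lower_active (hm : 0 < m) (hs : 0 < s) (hμl : 0 ≤ μl)
    (hpl : pl < pstar) (hpu : pstar < pu) (hp : p = pl) (hcsu : μu * (p - pu) = 0) :
    m * (p - pstar) + s * (μu - μl) < 0 := by
  have hμu : μu = 0 := (mul_eq_zero.mp hcsu).resolve_right (by linarith)
  have hgap : m * (p - pstar) < 0 := mul_neg_of_pos_of_neg hm (by linarith)
  have hpull : 0 ≤ s * μl := mul_nonneg hs.le hμl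
  rw [hμu]
  linarith

theorem stationarity_residual_pos_of_upper_active (hm : 0 < m) (hs : 0 < s) (hμu : 0 ≤ μu)
    (hpl : pl < pstar) (hpu : pstar < pu) (hp : p = pu) (hcsl : μl * (pl - p) = 0) :
    0 < m * (p - pstar) + s * (μu - μl) := by
  have hμl : μl = 0 := (mul_eq_zero.mp hcsl).resolve_right (by linarith)
  have hgap : 0 < m * (p - pstar) := mul_pos hm (by linarith)
  have hpush : 0 ≤ s * μu := mul_nonneg hs.le hμu
  rw [hμl]
  linarith

end ScalarKKT

theorem mutually_exclusive_active_sets_general (n : ℕ)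
    (m sqk Pl Pu Pstar P lamL lamU : Fin n → ℝ)
    (hm : ∀ i, 0 < m i) (hsqk : ∀ i, 0 < sqk i)
    (hset : ∀ i, Pl i < Pstar i ∧ Pstar i < Pu i)
    (hdual : ∀ i, 0 ≤ lamL i ∧ 0 ≤ lamU i)
    (hstat : ∃ c : ℝ, ∀ i, m i * (P i - Pstar i) + sqk i * (lamU i - lamL i) = c)
    (hcsl : ∀ i, lamL i * (Pl i - P i) = 0)
    (hcsu : ∀ i, lamU i * (P i - Pu i) = 0) :
    {i | P i = Pl i} = ∅ ∨ {i | P i = Pu i} = ∅ := by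
  obtain ⟨c, hc⟩ := hstat
  rw [or_iff_not_imp_left]
  intro hlower
  obtain ⟨i, hi⟩ := Set.nonempty_iff_ne_empty.mpr hlower
  refine Set.eq_empty_iff_forall_notMem.mpr fun j hj => ?_
  have hneg : c < 0 := hc i ▸ stationarity_residual_neg_of_lower_active (hm i) (hsqk i)
    (hdual i).1 (hset i).1 (hset i).2 hi (hcsu i)
  have hpos : 0 < c := hc j ▸ stationarity_residual_pos_of_upper_active (hm j) (hsqk j)
    (hdual j).2 (hset j).1 (hset j).2 hj (hcsl j)
  linarith

/-- **Mutually exclusive active sets.** Suppose `P_ℓ < P⋆ < P_u` componentwise and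
`(θ⋆, λ⋆)` is a KKT point of the constrained flow problem (primal feasibility,
dual feasibility, stationarity `M(P − P⋆) + K_I(λ_u − λ_ℓ) ∈ span 𝟙`, complementary
slackness) with `P = L θ⋆ + P_L`. Then the lower active set `{i | P i = P_ℓ i}` or the
upper active set `{i | P i = P_u i}` is empty. -/
theorem mutually_exclusive_active_sets (n : ℕ)
    (L : Matrix (Fin n) (Fin n) ℝ) (θ PL : Fin n → ℝ)
    (m sqk Pl Pu Pstar P lamL lamU : Fin n → ℝ)
    (hm : ∀ i, 0 < m i) (hsqk : ∀ i, 0 < sqk i)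
    (hP : P = L.mulVec θ + PL)
    (hset : ∀ i, Pl i < Pstar i ∧ Pstar i < Pu i)
    (hprim : ∀ i, Pl i ≤ P i ∧ P i ≤ Pu i)
    (hdual : ∀ i, 0 ≤ lamL i ∧ 0 ≤ lamU i)
    (hstat : ∃ c : ℝ, ∀ i, m i * (P i - Pstar i) + sqk i * (lamU i - lamL i) = c)
    (hcsl : ∀ i, lamL i * (Pl i - P i) = 0)
    (hcsu : ∀ i, lamU i * (P i - Pu i) = 0) :
    {i | P i = Pl i} = ∅ ∨ {i | P i = Pu i} = ∅ :=
  mutually_exclusive_active_sets_general n m sqk Pl Pu Pstar P lamL lamU hm hsqk hset hdual hstat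
    hcsl hcsu
end

section
/- (Synchronous frequency formula) Suppose the system has converged to a KKT point: ω_s 𝟙_n = M(P* − P) − K_I(λ*_u − λ*_ℓ) for a scalar ω_s, with P = Lθ* + P_L. Then ω_s = (∑_{i∉I_u∪I_ℓ} P*_i + ∑_{i∈I_u} P_{u,i} + ∑_{i∈I_ℓ} P_{ℓ,i} − ∑_{i∈N} P_{L,i}) / (∑_{i∉I_u∪I_ℓ} m_i^{-1}), where I_ℓ, I_u are the active lower and upper constraint sets. -/
/-!
Off the active sets the multipliers vanish, so stationarity gives `P i = P⋆ i - ω_s / m i`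
there, while on the active sets `P` sits at its bound. Summing over all buses and using the
power balance `∑ P = ∑ P_L` gives a linear equation in `ω_s` whose coefficient
`∑_{i ∉ I_u ∪ I_ℓ} m_i⁻¹` is positive.
-/

open Matrix BigOperators Finset

theorem eq_sub_mul_inv_of_eq_mul_sub {K : Type*} [Field K] {ω m a p : K} (hm : m ≠ 0)
    (h : ω = m * (a - p)) : p = a - ω * m⁻¹ := by
  rw [h, mul_comm m, mul_assoc, mul_inv_cancel₀ hm, mul_one, sub_sub_cancel]

theorem sum_eq_sum_compl_union_add_sum_add_sum {ι M : Type*} [Fintype ι] [DecidableEq ι]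
    [AddCommMonoid M] {s t : Finset ι} (hst : Disjoint s t) (f : ι → M) :
    ∑ i, f i = ∑ i ∈ (s ∪ t)ᶜ, f i + (∑ i ∈ s, f i + ∑ i ∈ t, f i) := by
  rw [← sum_union hst, sum_compl_add_sum]

theorem sum_inv_compl_pos {ι : Type*} [Fintype ι] [DecidableEq ι] {s : Finset ι}
    (hs : s ≠ univ) {m : ι → ℝ} (hm : ∀ i, 0 < m i) : 0 < ∑ i ∈ sᶜ, (m i)⁻¹ :=
  sum_pos (fun i _ => inv_pos.2 (hm i))
    (by rwa [nonempty_iff_ne_empty, ne_eq, compl_eq_empty_iff])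

/-- **Synchronous frequency formula.** At a converged KKT point with
`ω_s 𝟙 = M(P⋆ − P) − K_I(λ_u − λ_ℓ)`, power balance `∑ P = ∑ P_L`, and active sets
`I_u`, `I_ℓ` (where `P = P_u` resp. `P = P_ℓ` and off which the multipliers vanish),
the synchronous frequency is
`ω_s = (∑_{i∉I_u∪I_ℓ} P⋆_i + ∑_{i∈I_u} P_{u,i} + ∑_{i∈I_ℓ} P_{ℓ,i} − ∑_i P_{L,i}) /
(∑_{i∉I_u∪I_ℓ} m_i⁻¹)`. -/
theorem synchronous_frequency_formula (n : ℕ)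
    (Iu Il : Finset (Fin n)) (hdisj : Disjoint Iu Il) (hne : Iu ∪ Il ≠ Finset.univ)
    (m sqk P Pl Pu PL Pstar lamL lamU : Fin n → ℝ) (ωs : ℝ)
    (hm : ∀ i, 0 < m i)
    (hstat : ∀ i, ωs = m i * (Pstar i - P i) - sqk i * (lamU i - lamL i))
    (hbal : ∑ i, P i = ∑ i, PL i)
    (hslack : ∀ i, i ∉ Iu ∪ Il → lamL i = 0 ∧ lamU i = 0)
    (hu : ∀ i ∈ Iu, P i = Pu i) (hl : ∀ i ∈ Il, P i = Pl i) :
    ωs = ((∑ i ∈ (Iu ∪ Il)ᶜ, Pstar i) + (∑ i ∈ Iu, Pu i) + (∑ i ∈ Il, Pl i)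
            - ∑ i, PL i) / ∑ i ∈ (Iu ∪ Il)ᶜ, (m i)⁻¹ := by
  have hinactive : ∀ i ∈ (Iu ∪ Il)ᶜ, P i = Pstar i - ωs * (m i)⁻¹ := fun i hi => by
    obtain ⟨hL, hU⟩ := hslack i (mem_compl.1 hi)
    exact eq_sub_mul_inv_of_eq_mul_sub (hm i).ne' (by simpa [hL, hU] using hstat i)
  rw [sum_eq_sum_compl_union_add_sum_add_sum hdisj, sum_congr rfl hinactive,
    sum_congr rfl hu, sum_congr rfl hl, sum_sub_distrib, ← mul_sum] at hbal
  rw [eq_div_iff (sum_inv_compl_pos hne hm).ne']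
  linarith
end

section
/- (Lower active set forces positive frequency) Suppose P_{ℓ,i} < P*_i < P_{u,i} for all i, and at a KKT point I_ℓ ≠ ∅ (some node at lower limit) and (by mutual exclusivity) I_u = ∅. Then the synchronous frequency satisfies ω_s = m_i(P*_i − P_{ℓ,i}) + √k_i λ*_{ℓ,i} > 0 for any i ∈ I_ℓ, and moreover ∑_i P_{L,i} < ∑_i P*_i. -/
open Finset

/-! At a node of `I_ℓ`, stationarity writes `ω_s` as a positive term `m_i (P⋆_i − P_{ℓ,i})` plus a
nonnegative one. Off `I_ℓ` both multipliers vanish, so `ω_s = m_i (P⋆_i − P_i) > 0` forces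
`P_i < P⋆_i` there as well; with `P_i = P_{ℓ,i} < P⋆_i` on `I_ℓ` and the power balance
`∑ P_i = ∑ P_{L,i}` this gives `∑ P_{L,i} < ∑ P⋆_i`. -/

lemma frequency_pos_of_lower_limit {ω m s Pstar Pl lamL : ℝ} (hm : 0 < m) (hs : 0 ≤ s)
    (hPl : Pl < Pstar) (hlamL : 0 ≤ lamL) (hω : ω = m * (Pstar - Pl) + s * lamL) : 0 < ω :=
  hω ▸ add_pos_of_pos_of_nonneg (mul_pos hm (sub_pos.2 hPl)) (mul_nonneg hs hlamL)

lemma lt_setpoint_of_frequency_pos {ω m Pstar P : ℝ} (hω₀ : 0 < ω) (hm : 0 < m)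
    (hω : ω = m * (Pstar - P)) : P < Pstar :=
  sub_pos.1 (pos_of_mul_pos_right (hω ▸ hω₀) hm.le)

theorem lower_active_set_positive_frequency_general (n : ℕ)
    (Il : Finset (Fin n)) (hIlne : Il.Nonempty)
    (m sqk P Pl Pu PL Pstar lamL lamU : Fin n → ℝ) (ωs : ℝ)
    (hm : ∀ i, 0 < m i) (hsqk : ∀ i, 0 < sqk i)
    (hset : ∀ i, Pl i < Pstar i ∧ Pstar i < Pu i)
    (hIl : ∀ i, i ∈ Il ↔ P i = Pl i)
    (hdual : ∀ i, 0 ≤ lamL i ∧ 0 ≤ lamU i)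
    (hlamU : ∀ i, lamU i = 0)
    (hlamL : ∀ i, i ∉ Il → lamL i = 0)
    (hstat : ∀ i, ωs = m i * (Pstar i - P i) + sqk i * (lamL i - lamU i))
    (hbal : ∑ i, P i = ∑ i, PL i) :
    (∀ i ∈ Il, ωs = m i * (Pstar i - Pl i) + sqk i * lamL i) ∧
    0 < ωs ∧ ∑ i, PL i < ∑ i, Pstar i := by
  have hlower : ∀ i ∈ Il, ωs = m i * (Pstar i - Pl i) + sqk i * lamL i := fun i hi => by
    simpa [(hIl i).1 hi, hlamU i] using hstat i
  obtain ⟨j, hj⟩ := hIlne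
  have hωs : 0 < ωs :=
    frequency_pos_of_lower_limit (hm j) (hsqk j).le (hset j).1 (hdual j).1 (hlower j hj)
  have hP : ∀ i, P i < Pstar i := fun i => by
    by_cases hi : i ∈ Il
    · exact (hIl i).1 hi ▸ (hset i).1
    · exact lt_setpoint_of_frequency_pos hωs (hm i) (by simpa [hlamL i hi, hlamU i] using hstat i)
  exact ⟨hlower, hωs, hbal ▸ sum_lt_sum_of_nonempty ⟨j, mem_univ j⟩ fun i _ => hP i⟩

/-- **Lower active set forces positive frequency.** Under the setpoint assumption
`P_ℓ < P⋆ < P_u` and feasibility `∑ P_ℓ < ∑ P_L < ∑ P_u`, at a KKT point with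
nonempty lower active set `I_ℓ` and empty upper active set (`P i < P_u i` for all `i`),
the synchronous frequency satisfies
`ω_s = m_i (P⋆_i − P_{ℓ,i}) + √k_i λ_{ℓ,i} > 0` for every `i ∈ I_ℓ`, and moreover
`∑ P_L < ∑ P⋆`. -/
theorem lower_active_set_positive_frequency (n : ℕ)
    (Il : Finset (Fin n)) (hIlne : Il.Nonempty)
    (m sqk P Pl Pu PL Pstar lamL lamU : Fin n → ℝ) (ωs : ℝ)
    (hm : ∀ i, 0 < m i) (hsqk : ∀ i, 0 < sqk i)
    (hset : ∀ i, Pl i < Pstar i ∧ Pstar i < Pu i)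
    (hfeas : (∑ i, Pl i < ∑ i, PL i) ∧ ∑ i, PL i < ∑ i, Pu i)
    (hIl : ∀ i, i ∈ Il ↔ P i = Pl i)
    (hIu : ∀ i, P i < Pu i)
    (hdual : ∀ i, 0 ≤ lamL i ∧ 0 ≤ lamU i)
    (hlamU : ∀ i, lamU i = 0)
    (hlamL : ∀ i, i ∉ Il → lamL i = 0)
    (hstat : ∀ i, ωs = m i * (Pstar i - P i) + sqk i * (lamL i - lamU i))
    (hbal : ∑ i, P i = ∑ i, PL i) :
    (∀ i ∈ Il, ωs = m i * (Pstar i - Pl i) + sqk i * lamL i) ∧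
    0 < ωs ∧ ∑ i, PL i < ∑ i, Pstar i :=
  lower_active_set_positive_frequency_general n Il hIlne m sqk P Pl Pu PL Pstar lamL lamU ωs hm hsqk
    hset hIl hdual hlamU hlamL hstat hbal
end

section
/- (Upper active set forces negative frequency) Suppose P_{ℓ,i} < P*_i < P_{u,i} for all i, and at a KKT point I_u ≠ ∅ and I_ℓ = ∅. Then ω_s = m_i(P*_i − P_{u,i}) − √k_i λ*_{u,i} < 0 for any i ∈ I_u, and ∑_i P_{L,i} > ∑_i P*_i. -/
open Finset

/-!
At an index of the upper active set, stationarity reads `ω_s = m_i (P⋆_i − P_{u,i}) − √k_i λ_{u,i}`,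
which is negative because `P⋆_i < P_{u,i}` and `λ_{u,i} ≥ 0`. At an inactive index it reads
`ω_s = m_i (P⋆_i − P_i)`, so `ω_s < 0` forces `P⋆_i < P_i`; at an active index `P_i = P_{u,i} > P⋆_i`.
Summing `P⋆_i < P_i` and using the power balance `∑ P_i = ∑ P_{L,i}` gives `∑ P⋆ < ∑ P_L`.
-/

lemma stationarity_of_upper_active {ω m s P Pstar Pu lamL lamU : ℝ}
    (hstat : ω = m * (Pstar - P) + s * (lamL - lamU)) (hlamL : lamL = 0) (hP : P = Pu) :
    ω = m * (Pstar - Pu) - s * lamU := by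
  subst hlamL hP
  linarith

lemma neg_of_eq_mul_sub_sub_mul {ω m s Pstar Pu lamU : ℝ} (hm : 0 < m) (hs : 0 ≤ s)
    (hlamU : 0 ≤ lamU) (hlt : Pstar < Pu) (h : ω = m * (Pstar - Pu) - s * lamU) : ω < 0 := by
  have hgap : m * (Pstar - Pu) < 0 := mul_neg_of_pos_of_neg hm (sub_neg.mpr hlt)
  linarith [mul_nonneg hs hlamU]

lemma lt_of_neg_eq_mul_sub {ω m P Pstar : ℝ} (hm : 0 < m) (hω : ω < 0)
    (h : ω = m * (Pstar - P)) : Pstar < P :=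
  sub_neg.mp (neg_of_mul_neg_right (h ▸ hω) hm.le)

theorem upper_active_set_negative_frequency_general (n : ℕ)
    (Iu : Finset (Fin n)) (hIune : Iu.Nonempty)
    (m sqk P Pl Pu PL Pstar lamL lamU : Fin n → ℝ) (ωs : ℝ)
    (hm : ∀ i, 0 < m i) (hsqk : ∀ i, 0 < sqk i)
    (hset : ∀ i, Pl i < Pstar i ∧ Pstar i < Pu i)
    (hIu : ∀ i, i ∈ Iu ↔ P i = Pu i)
    (hdual : ∀ i, 0 ≤ lamL i ∧ 0 ≤ lamU i)
    (hlamL : ∀ i, lamL i = 0)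
    (hlamU : ∀ i, i ∉ Iu → lamU i = 0)
    (hstat : ∀ i, ωs = m i * (Pstar i - P i) + sqk i * (lamL i - lamU i))
    (hbal : ∑ i, P i = ∑ i, PL i) :
    (∀ i ∈ Iu, ωs = m i * (Pstar i - Pu i) - sqk i * lamU i) ∧
    ωs < 0 ∧ ∑ i, Pstar i < ∑ i, PL i := by
  obtain ⟨j, hj⟩ := hIune
  have hform : ∀ i ∈ Iu, ωs = m i * (Pstar i - Pu i) - sqk i * lamU i := fun i hi =>
    stationarity_of_upper_active (hstat i) (hlamL i) ((hIu i).mp hi)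
  have hω : ωs < 0 :=
    neg_of_eq_mul_sub_sub_mul (hm j) (hsqk j).le (hdual j).2 (hset j).2 (hform j hj)
  have hlt : ∀ i, Pstar i < P i := by
    intro i
    by_cases hi : i ∈ Iu
    · exact (hIu i).mp hi ▸ (hset i).2
    · have hstat_i := hstat i
      rw [hlamL i, hlamU i hi, sub_self, mul_zero, add_zero] at hstat_i
      exact lt_of_neg_eq_mul_sub (hm i) hω hstat_i
  refine ⟨hform, hω, ?_⟩
  calc ∑ i, Pstar i < ∑ i, P i := sum_lt_sum_of_nonempty ⟨j, mem_univ j⟩ fun i _ => hlt i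
    _ = ∑ i, PL i := hbal

/-- **Upper active set forces negative frequency.** Under the setpoint assumption
`P_ℓ < P⋆ < P_u` and feasibility `∑ P_ℓ < ∑ P_L < ∑ P_u`, at a KKT point with
nonempty upper active set `I_u` and empty lower active set (`P_ℓ i < P i` for all `i`),
the synchronous frequency satisfies
`ω_s = m_i (P⋆_i − P_{u,i}) − √k_i λ_{u,i} < 0` for every `i ∈ I_u`, and moreover
`∑ P_L > ∑ P⋆`. -/
theorem upper_active_set_negative_frequency (n : ℕ)
    (Iu : Finset (Fin n)) (hIune : Iu.Nonempty)
    (m sqk P Pl Pu PL Pstar lamL lamU : Fin n → ℝ) (ωs : ℝ)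
    (hm : ∀ i, 0 < m i) (hsqk : ∀ i, 0 < sqk i)
    (hset : ∀ i, Pl i < Pstar i ∧ Pstar i < Pu i)
    (hfeas : (∑ i, Pl i < ∑ i, PL i) ∧ ∑ i, PL i < ∑ i, Pu i)
    (hIu : ∀ i, i ∈ Iu ↔ P i = Pu i)
    (hIl : ∀ i, Pl i < P i)
    (hdual : ∀ i, 0 ≤ lamL i ∧ 0 ≤ lamU i)
    (hlamL : ∀ i, lamL i = 0)
    (hlamU : ∀ i, i ∉ Iu → lamU i = 0)
    (hstat : ∀ i, ωs = m i * (Pstar i - P i) + sqk i * (lamL i - lamU i))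
    (hbal : ∑ i, P i = ∑ i, PL i) :
    (∀ i ∈ Iu, ωs = m i * (Pstar i - Pu i) - sqk i * lamU i) ∧
    ωs < 0 ∧ ∑ i, Pstar i < ∑ i, PL i :=
  upper_active_set_negative_frequency_general n Iu hIune m sqk P Pl Pu PL Pstar lamL lamU ωs hm hsqk
    hset hIu hdual hlamL hlamU hstat hbal
end
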